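/- arXiv:2202.05872 — 3 statements merged into one kernel-verified Lean document; each statement's English description precedes it below -/
import Mathlib

section
/- The derived multiset ordering of a quasi-order is itself a quasi-order: if ≥ₓ is reflexive and transitive on X, then the derived multiset ordering ≥_{M(X)} on finite multisets of X is reflexive and transitive. -/
attribute [local instance] Classical.propDecidable

/-- The derived multiset quasi-ordering of a relation `r`: `T ≥ U` iff `U = ∅`,
or some `t ∈ T` and `u ∈ U` are `≈`-equal (in both directions of `r`) and
`T − t ≥ U − u`, or some `t ∈ T` satisfies `T − t ≥ U` minus all elements
strictly below `t`. -/
inductive MulGE {α : Type} (r : α → α → Prop) : Multiset α → Multiset α → Prop where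
  | empty (T : Multiset α) : MulGE r T 0
  | cancel {T U : Multiset α} (t u : α) (ht : t ∈ T) (hu : u ∈ U)
      (h1 : r t u) (h2 : r u t) (h : MulGE r (T.erase t) (U.erase u)) : MulGE r T U
  | dominate {T U : Multiset α} (t : α) (ht : t ∈ T)
      (h : MulGE r (T.erase t) (U.filter (fun u => ¬ (r t u ∧ ¬ r u t)))) : MulGE r T U

/-!
Both properties are easiest to see through the classical description of the multiset
extension: `T ≥ U` iff `T = T₁ + T₂` and `U = U₁ + U₂`, where `T₁` and `U₁` match up
elementwise in the equivalence `r t u ∧ r u t`, and every element of `U₂` lies strictly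
below some element of `T₂`. The `cancel` steps of a derivation build the matching and the
`dominate` steps build the strict part. Reflexivity is then the decomposition `T = T + 0`.
For transitivity, the two decompositions of the middle multiset are refined to a common one
(Riesz decomposition for multisets); matched blocks compose by transitivity of the
equivalence, and everything else of the last multiset ends up strictly below something in
the first one, since a strict step followed or preceded by weak steps stays strict.
-/

theorem Multiset.exists_refinement_of_add_eq_add {α : Type*} {X Y Z W : Multiset α}
    (h : X + Y = Z + W) :
    ∃ A B C D : Multiset α, X = A + B ∧ Y = C + D ∧ Z = A + C ∧ W = B + D := by
  refine ⟨X ∩ Z, X - X ∩ Z, Z - X ∩ Z, Y - (Z - X ∩ Z), ?_, ?_, ?_, ?_⟩ <;>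
  · ext x
    have hx := congrArg (Multiset.count x) h
    simp only [Multiset.count_add] at hx
    simp only [Multiset.count_sub, Multiset.count_inter, Multiset.count_add]
    omega

section Dominance

variable {α : Type*} (r : α → α → Prop)

def Dominates (T U : Multiset α) : Prop :=
  ∀ u ∈ U, ∃ t ∈ T, r t u

def StrictlyDominates (T U : Multiset α) : Prop :=
  ∀ u ∈ U, ∃ t ∈ T, r t u ∧ ¬ r u t

variable {r} {T T' U U' V : Multiset α}

theorem StrictlyDominates.dominates (h : StrictlyDominates r T U) : Dominates r T U :=
  fun u hu => (h u hu).imp fun _ ht => ⟨ht.1, ht.2.1⟩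

theorem StrictlyDominates.mono_left (h : StrictlyDominates r T U) (hT : T ≤ T') :
    StrictlyDominates r T' U :=
  fun u hu => (h u hu).imp fun _ ht => ⟨Multiset.mem_of_le hT ht.1, ht.2⟩

theorem StrictlyDominates.mono_right (h : StrictlyDominates r T U) (hU : U' ≤ U) :
    StrictlyDominates r T U' :=
  fun u hu => h u (Multiset.mem_of_le hU hu)

theorem StrictlyDominates.add_right (h : StrictlyDominates r T U)
    (h' : StrictlyDominates r T U') : StrictlyDominates r T (U + U') := by
  intro u hu
  rcases Multiset.mem_add.1 hu with hu | hu
  exacts [h u hu, h' u hu]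

theorem Dominates.add (h : Dominates r T U) (h' : Dominates r T' U') :
    Dominates r (T + T') (U + U') := by
  intro u hu
  rcases Multiset.mem_add.1 hu with hu | hu
  · obtain ⟨t, ht, htu⟩ := h u hu
    exact ⟨t, Multiset.mem_add.2 (.inl ht), htu⟩
  · obtain ⟨t, ht, htu⟩ := h' u hu
    exact ⟨t, Multiset.mem_add.2 (.inr ht), htu⟩

theorem StrictlyDominates.trans_dominates [IsTrans α r] (h : StrictlyDominates r T U)
    (h' : Dominates r U V) : StrictlyDominates r T V := by
  intro v hv
  obtain ⟨u, hu, huv⟩ := h' v hv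
  obtain ⟨t, ht, htu, hut⟩ := h u hu
  exact ⟨t, ht, _root_.trans htu huv, fun hvt => hut (_root_.trans huv hvt)⟩

theorem Dominates.trans_strictlyDominates [IsTrans α r] (h : Dominates r T U)
    (h' : StrictlyDominates r U V) : StrictlyDominates r T V := by
  intro v hv
  obtain ⟨u, hu, huv, hvu⟩ := h' v hv
  obtain ⟨t, ht, htu⟩ := h u hu
  exact ⟨t, ht, _root_.trans htu huv, fun hvt => hvu (_root_.trans hvt htu)⟩

theorem Multiset.Rel.dominates (h : Multiset.Rel (AntisymmRel r) T U) : Dominates r T U :=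
  fun _ hu => (Multiset.exists_mem_of_rel_of_mem (Multiset.rel_flip.2 h) hu).imp
    fun _ ht => ⟨ht.1, ht.2.1⟩

end Dominance

def MultisetExtension {α : Type*} (r : α → α → Prop) (T U : Multiset α) : Prop :=
  ∃ T₁ T₂ U₁ U₂ : Multiset α, T = T₁ + T₂ ∧ U = U₁ + U₂ ∧
    Multiset.Rel (AntisymmRel r) T₁ U₁ ∧ StrictlyDominates r T₂ U₂

namespace MultisetExtension

variable {α : Type*} {r : α → α → Prop}

theorem refl [Std.Refl r] (T : Multiset α) : MultisetExtension r T T :=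
  ⟨T, 0, T, 0, (add_zero T).symm, (add_zero T).symm,
    Multiset.rel_refl_of_refl_on fun x _ => AntisymmRel.refl r x,
    fun _ hu => absurd hu (Multiset.notMem_zero _)⟩

theorem trans [IsTrans α r] {T U V : Multiset α} (hTU : MultisetExtension r T U)
    (hUV : MultisetExtension r U V) : MultisetExtension r T V := by
  obtain ⟨T₁, T₂, U₁, U₂, rfl, rfl, hTU₁, hTU₂⟩ := hTU
  obtain ⟨U₁', U₂', V₁, V₂, hU, rfl, hUV₁, hUV₂⟩ := hUV
  obtain ⟨A, B, C, D, rfl, rfl, rfl, rfl⟩ :=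
    Multiset.exists_refinement_of_add_eq_add hU.symm
  obtain ⟨Ta, Tc, hTaA, hTcC, rfl⟩ := Multiset.rel_add_right.1 hTU₁
  obtain ⟨Va, Vb, hAVa, hBVb, rfl⟩ := Multiset.rel_add_left.1 hUV₁
  refine ⟨Ta, Tc + T₂, Va, Vb + V₂, add_assoc _ _ _, add_assoc _ _ _,
    hTaA.trans _ hAVa, .add_right ?_ ?_⟩
  · exact ((hTU₂.mono_right le_self_add).trans_dominates hBVb.dominates).mono_left le_add_self
  · exact (hTcC.dominates.add (hTU₂.mono_right le_add_self).dominates).trans_strictlyDominates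
      hUV₂

end MultisetExtension

section MulGE

variable {α : Type} {r : α → α → Prop}

theorem MulGE.multisetExtension {T U : Multiset α} (h : MulGE r T U) :
    MultisetExtension r T U := by
  induction h with
  | empty T =>
    exact ⟨0, T, 0, 0, by simp, by simp, .zero, fun _ hu => absurd hu (Multiset.notMem_zero _)⟩
  | @cancel T U t u ht hu htu hut _ ih =>
    obtain ⟨T₁, T₂, U₁, U₂, hT, hU, hrel, hdom⟩ := ih
    refine ⟨t ::ₘ T₁, T₂, u ::ₘ U₁, U₂, ?_, ?_, .cons ⟨htu, hut⟩ hrel, hdom⟩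
    · rw [Multiset.cons_add, ← hT, Multiset.cons_erase ht]
    · rw [Multiset.cons_add, ← hU, Multiset.cons_erase hu]
  | @dominate T U t ht _ ih =>
    obtain ⟨T₁, T₂, U₁, U₂, hT, hU, hrel, hdom⟩ := ih
    refine ⟨T₁, t ::ₘ T₂, U₁, U₂ + U.filter (fun u => ¬ ¬ (r t u ∧ ¬ r u t)), ?_, ?_, hrel,
      (hdom.mono_left (Multiset.le_cons_self _ _)).add_right fun u hu => ?_⟩
    · rw [add_comm T₁, Multiset.cons_add, add_comm T₂, ← hT, Multiset.cons_erase ht]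
    · rw [← add_assoc, ← hU, Multiset.filter_add_not]
    · exact ⟨t, Multiset.mem_cons_self t T₂, not_not.1 (Multiset.mem_filter.1 hu).2⟩

theorem mulGE_of_strictlyDominates {T U : Multiset α} (h : StrictlyDominates r T U) :
    MulGE r T U := by
  induction T using Multiset.induction generalizing U with
  | empty =>
    obtain rfl : U = 0 := Multiset.eq_zero_of_forall_notMem fun u hu => by
      obtain ⟨t, ht, -⟩ := h u hu
      exact Multiset.notMem_zero t ht
    exact .empty 0
  | cons a T ih =>
    refine .dominate a (Multiset.mem_cons_self a T) ?_
    rw [Multiset.erase_cons_head]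
    refine ih fun u hu => ?_
    obtain ⟨hu, hau⟩ := Multiset.mem_filter.1 hu
    obtain ⟨t, ht, htu⟩ := h u hu
    rcases Multiset.mem_cons.1 ht with rfl | ht
    exacts [absurd htu hau, ⟨t, ht, htu⟩]

theorem MultisetExtension.mulGE {T U : Multiset α} (h : MultisetExtension r T U) :
    MulGE r T U := by
  obtain ⟨T₁, T₂, U₁, U₂, rfl, rfl, hrel, hdom⟩ := h
  induction hrel with
  | zero => simpa using mulGE_of_strictlyDominates hdom
  | @cons a b T₁ U₁ hab _ ih =>
    rw [Multiset.cons_add, Multiset.cons_add]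
    refine .cancel a b (Multiset.mem_cons_self _ _) (Multiset.mem_cons_self _ _) hab.1 hab.2 ?_
    rwa [Multiset.erase_cons_head, Multiset.erase_cons_head]

theorem mulGE_iff_multisetExtension {T U : Multiset α} :
    MulGE r T U ↔ MultisetExtension r T U :=
  ⟨MulGE.multisetExtension, MultisetExtension.mulGE⟩

end MulGE

/-- The derived multiset ordering of a quasi-order is itself a quasi-order:
it is reflexive and transitive on finite multisets. -/
theorem stmt_7 {α : Type} (r : α → α → Prop)
    (hrefl : ∀ x, r x x) (htrans : ∀ x y z, r x y → r y z → r x z) :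
    (∀ T : Multiset α, MulGE r T T) ∧
    (∀ T U V : Multiset α, MulGE r T U → MulGE r U V → MulGE r T V) := by
  have : IsPreorder α r := { refl := hrefl, trans := htrans }
  simp only [mulGE_iff_multisetExtension]
  exact ⟨MultisetExtension.refl, fun _ _ _ => MultisetExtension.trans⟩
end

section
/- If ≥ₓ is a well-quasi-ordering on X, then the derived multiset ordering on finite multisets over X is a well-quasi-ordering. -/
/-!
Say that `U` embeds into `T` if a sub-multiset of `T` can be matched one-to-one with `U` so that
every element of `U` lies below its partner. An embedding already gives `MulGE r T U`: a partner
equivalent to its `u` cancels it, and a partner strictly above `u` dominates it. By Higman's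
lemma, applied to the lists underlying the multisets, embedding is a well-quasi-ordering.
-/

attribute [local instance] Classical.propDecidable

namespace Multiset

variable {α β : Type*} {r : α → β → Prop}

theorem Rel.exists_le_rel_of_le {T : Multiset α} {U : Multiset β} (hrel : Rel r T U) :
    ∀ {V : Multiset β}, V ≤ U → ∃ T' ≤ T, Rel r T' V := by
  induction hrel with
  | zero =>
    intro V hV
    exact ⟨0, le_rfl, by rw [nonpos_iff_eq_zero.1 hV]; exact .zero⟩
  | @cons t u T U htu _ ih =>
    intro V hV
    by_cases hu : u ∈ V
    · obtain ⟨T', hT', hrel'⟩ := ih (erase_le_iff_le_cons.2 hV)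
      exact ⟨t ::ₘ T', cons_le_cons t hT', cons_erase hu ▸ hrel'.cons htu⟩
    · obtain ⟨T', hT', hrel'⟩ := ih ((le_cons_of_notMem hu).1 hV)
      exact ⟨T', hT'.trans (le_cons_self T t), hrel'⟩

theorem rel_coe_of_forall₂ : ∀ {l₁ : List α} {l₂ : List β},
    List.Forall₂ r l₁ l₂ → Rel r (l₁ : Multiset α) l₂
  | _, _, .nil => .zero
  | _, _, .cons h hs => .cons h (rel_coe_of_forall₂ hs)

theorem wellQuasiOrdered_exists_le_rel {r : α → α → Prop} [IsPreorder α r]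
    (hr : WellQuasiOrdered r) :
    WellQuasiOrdered fun U T : Multiset α => ∃ T' ≤ T, Rel r U T' := by
  intro f
  have higman := (Set.partiallyWellOrderedOn_univ_iff.2 hr).partiallyWellOrderedOn_sublistForall₂ r
  obtain ⟨i, j, hij, hsub⟩ :=
    higman.exists_lt (f := fun n => (f n).toList) fun _ _ _ => Set.mem_univ _
  obtain ⟨l, hl, hlj⟩ := List.sublistForall₂_iff.1 hsub
  refine ⟨i, j, hij, l, ?_, ?_⟩
  · exact coe_toList (f j) ▸ coe_le.2 hlj.subperm
  · simpa using rel_coe_of_forall₂ hl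

end Multiset

open Multiset

theorem MulGE.of_le_of_rel {α : Type} {r : α → α → Prop} {T T' U : Multiset α}
    (hle : T' ≤ T) (hrel : Rel r T' U) : MulGE r T U := by
  induction U using Multiset.strongInductionOn generalizing T T' with
  | ih U ih =>
    rcases empty_or_exists_mem U with rfl | ⟨u, hu⟩
    · exact .empty T
    rw [← cons_erase hu, rel_cons_right] at hrel
    obtain ⟨t, T₀, htu, hrel₀, rfl⟩ := hrel
    have ht : t ∈ T := mem_of_le hle (mem_cons_self t T₀)
    have hT₀ : T₀ ≤ T.erase t := by simpa using erase_le_erase t hle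
    by_cases hut : r u t
    · exact .cancel t u ht hu htu hut (ih _ (erase_lt.2 hu) hT₀ hrel₀)
    · set P := fun u' => ¬ (r t u' ∧ ¬ r u' t)
      -- `t` dominates `u` itself, so the survivors of the filter all lie in `U.erase u`.
      have hfilter : U.filter P ≤ U.erase u := by
        conv_lhs => rw [← cons_erase hu]
        rw [filter_cons_of_neg _ (fun hP => hP ⟨htu, hut⟩)]
        exact filter_le _ _
      obtain ⟨T'', hT'', hrel''⟩ := hrel₀.exists_le_rel_of_le hfilter
      exact .dominate t ht (ih _ (hfilter.trans_lt (erase_lt.2 hu)) (hT''.trans hT₀) hrel'')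

/-- If `r` is a well-quasi-ordering on `α`, then the derived multiset ordering
is a well-quasi-ordering on finite multisets over `α`. -/
theorem stmt_8 {α : Type} (r : α → α → Prop)
    (hrefl : ∀ x, r x x) (htrans : ∀ x y z, r x y → r y z → r x z)
    (hwqo : ∀ f : ℕ → α, ∃ i j : ℕ, i < j ∧ r (f j) (f i))
    (seq : ℕ → Multiset α) :
    ∃ i j : ℕ, i < j ∧ MulGE r (seq j) (seq i) := by
  have : IsPreorder α (flip r) :=
    { refl := hrefl, trans := fun a b c hab hbc => htrans c b a hbc hab }
  obtain ⟨i, j, hij, T', hle, hrel⟩ := wellQuasiOrdered_exists_le_rel (r := flip r) hwqo seq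
  exact ⟨i, j, hij, .of_le_of_rel hle (rel_flip.1 hrel)⟩
end

section
/- If the underlying precedence ≥_F on a finite set of function symbols is a total well-quasi-ordering, then the recursive path quasi-ordering ≥_RPQO derived from it is a well-quasi-ordering on ground terms. -/
attribute [local instance] Classical.propDecidable

/-- Ground terms over a signature `F` with arity function `ar`. -/
inductive GTerm (F : Type) (ar : F → ℕ) : Type where
  | mk (f : F) (args : Fin (ar f) → GTerm F ar) : GTerm F ar

/-- The weight of a term: `w(f(t₁,…,tₙ)) = w(f) + Σ w(tᵢ)`. -/
def weightOf {F : Type} {ar : F → ℕ} (w : F → ℕ) : GTerm F ar → ℕ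
  | .mk f args => w f + ∑ i : Fin (ar f), weightOf w (args i)

/-- Size of a term (number of function symbol occurrences). -/
def tsize {F : Type} {ar : F → ℕ} : GTerm F ar → ℕ
  | .mk f args => 1 + ∑ i : Fin (ar f), tsize (args i)

/-- Strict part of the derived multiset ordering. -/
def MulGT {α : Type} (r : α → α → Prop) (T U : Multiset α) : Prop :=
  MulGE r T U ∧ ¬ MulGE r U T

/-- Strict part of the precedence. -/
def strictF {F : Type} (ge : F → F → Prop) (f g : F) : Prop := ge f g ∧ ¬ ge g f

/-- Equivalence part of the precedence. -/
def equivF {F : Type} (ge : F → F → Prop) (f g : F) : Prop := ge f g ∧ ge g f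

/-- The multiset of arguments of a term. -/
def argsM {F : Type} {ar : F → ℕ} {f : F} (args : Fin (ar f) → GTerm F ar) :
    Multiset (GTerm F ar) := (List.ofFn args : List (GTerm F ar))

/-- Fuelled recursive path quasi-ordering: `f(t₁,…,tₘ) ≥ g(u₁,…,uₙ)` iff
(1) `f >_F g` and `{f(ts)} >_mul {us}`, or (2) `g >_F f` and `{ts} ≥_mul {g(us)}`,
or (3) `f ≈_F g` and `{ts} ≥_mul {us}`.  Since each recursive comparison strictly
decreases the total size of the compared pair, the fuel `tsize t + tsize u` used
in `RPQO` below makes this the exact recursive path quasi-ordering. -/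
def RPQOf {F : Type} {ar : F → ℕ} (ge : F → F → Prop) :
    ℕ → GTerm F ar → GTerm F ar → Prop
  | 0, _, _ => False
  | n + 1, .mk f ts, .mk g us =>
      (strictF ge f g ∧ MulGT (RPQOf ge n) {GTerm.mk f ts} (argsM us)) ∨
      (strictF ge g f ∧ MulGE (RPQOf ge n) (argsM ts) {GTerm.mk g us}) ∨
      (equivF ge f g ∧ MulGE (RPQOf ge n) (argsM ts) (argsM us))

/-- The recursive path quasi-ordering derived from the precedence `ge`. -/
def RPQO {F : Type} {ar : F → ℕ} (ge : F → F → Prop) (t u : GTerm F ar) : Prop :=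
  RPQOf ge (tsize t + tsize u) t u

/-!
Nash-Williams' minimal bad sequence argument. Take a bad sequence `b` of terms that is minimal in
size at every position. The arguments of the terms `b k` form a well-quasi-ordered set: a bad
sequence of them, spliced after the first terms of `b`, would be a smaller bad sequence, since a
term is above everything one of its arguments is above. By Higman's lemma the argument lists are
then well-quasi-ordered under sublist embedding, and together with the precedence on the head
symbols this yields `m < n` with `head (b n) ≥ head (b m)` and `args (b n) ≥_mul args (b m)`,
whence `b n ≥ b m`, contradicting badness. Reflexivity and transitivity of the RPQO, and the fact
that a term is strictly above the arguments of every term below it, are proved by induction on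
size.
-/

namespace MulGE

variable {α : Type} {r r' : α → α → Prop}

theorem eq_zero_of_zero_left {V : Multiset α} (h : MulGE r 0 V) : V = 0 := by
  cases h with
  | empty => rfl
  | cancel t _ ht => simp at ht
  | dominate t ht => simp at ht

theorem mono_left {T T' U : Multiset α} (hle : T ≤ T') (h : MulGE r T U) : MulGE r T' U := by
  induction h generalizing T' with
  | empty => exact .empty _
  | cancel t u ht hu h1 h2 _ ih =>
      exact .cancel t u (Multiset.mem_of_le hle ht) hu h1 h2 (ih (Multiset.erase_le_erase t hle))
  | dominate t ht _ ih =>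
      exact .dominate t (Multiset.mem_of_le hle ht) (ih (Multiset.erase_le_erase t hle))

theorem mono_right {T U U' : Multiset α} (hle : U' ≤ U) (h : MulGE r T U) : MulGE r T U' := by
  induction h generalizing U' with
  | empty => rw [Multiset.le_zero.mp hle]; exact .empty _
  | cancel t u ht hu h1 h2 _ ih =>
      by_cases hmem : u ∈ U'
      · exact .cancel t u ht hmem h1 h2 (ih (Multiset.erase_le_erase u hle))
      · refine mono_left (Multiset.erase_le t _) (ih ?_)
        rw [← Multiset.erase_of_notMem hmem]
        exact Multiset.erase_le_erase u hle
  | dominate t ht _ ih =>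
      exact .dominate t ht (ih (Multiset.filter_le_filter _ hle))

theorem exists_ge {T U : Multiset α} (h : MulGE r T U) {u : α} (hu : u ∈ U) :
    ∃ t ∈ T, r t u := by
  induction h with
  | empty => simp at hu
  | cancel t u' ht _ h1 _ _ ih =>
      by_cases he : u = u'
      · exact ⟨t, ht, he ▸ h1⟩
      · obtain ⟨t', ht', hr⟩ := ih ((Multiset.mem_erase_of_ne he).mpr hu)
        exact ⟨t', Multiset.mem_of_mem_erase ht', hr⟩
  | dominate t ht _ ih =>
      by_cases hp : r t u ∧ ¬ r u t
      · exact ⟨t, ht, hp.1⟩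
      · obtain ⟨t', ht', hr⟩ := ih (Multiset.mem_filter.mpr ⟨hu, hp⟩)
        exact ⟨t', Multiset.mem_of_mem_erase ht', hr⟩

theorem add_of_forall_gt {T W V : Multiset α} {t : α} (ht : t ∈ T) (hW : MulGE r (T.erase t) W)
    (hV : ∀ v ∈ V, r t v ∧ ¬ r v t) : MulGE r T (W + V) := by
  refine .dominate t ht (mono_right ?_ hW)
  rw [Multiset.filter_add, (Multiset.filter_eq_nil (s := V)).mpr fun v hv hn => hn (hV v hv),
    add_zero]
  exact Multiset.filter_le _ _

theorem of_forall_gt {T V : Multiset α} {t : α} (ht : t ∈ T) (hV : ∀ v ∈ V, r t v ∧ ¬ r v t) :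
    MulGE r T V := by
  simpa using add_of_forall_gt ht (.empty _) hV

theorem singleton_right_iff {T : Multiset α} {u : α} : MulGE r T {u} ↔ ∃ t ∈ T, r t u := by
  refine ⟨fun h => h.exists_ge (Multiset.mem_singleton_self u), fun ⟨t, ht, htu⟩ => ?_⟩
  by_cases hut : r u t
  · refine .cancel t u ht (Multiset.mem_singleton_self u) htu hut ?_
    rw [Multiset.erase_singleton]
    exact .empty _
  · exact of_forall_gt ht fun v hv => (Multiset.mem_singleton.mp hv) ▸ ⟨htu, hut⟩

theorem refl {T : Multiset α} (h : ∀ a ∈ T, r a a) : MulGE r T T := by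
  induction T using Multiset.induction with
  | empty => exact .empty _
  | cons a T ih =>
      refine .cancel a a (Multiset.mem_cons_self a T) (Multiset.mem_cons_self a T)
        (h a (Multiset.mem_cons_self a T)) (h a (Multiset.mem_cons_self a T)) ?_
      rw [Multiset.erase_cons_head]
      exact ih fun b hb => h b (Multiset.mem_cons_of_mem hb)

theorem rel_congr {T U : Multiset α}
    (hcong : ∀ a ∈ T, ∀ b ∈ U, (r a b ↔ r' a b) ∧ (r b a ↔ r' b a)) (h : MulGE r T U) :
    MulGE r' T U := by
  induction h with
  | empty => exact .empty _
  | cancel t u ht hu h1 h2 _ ih =>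
      refine .cancel t u ht hu ((hcong t ht u hu).1.mp h1) ((hcong t ht u hu).2.mp h2)
        (ih fun a ha b hb =>
          hcong a (Multiset.mem_of_mem_erase ha) b (Multiset.mem_of_mem_erase hb))
  | @dominate T U t ht _ ih =>
      refine .dominate t ht ?_
      have hfilter : U.filter (fun u => ¬ (r' t u ∧ ¬ r' u t)) =
          U.filter (fun u => ¬ (r t u ∧ ¬ r u t)) :=
        Multiset.filter_congr fun b hb => by rw [(hcong t ht b hb).1, (hcong t ht b hb).2]
      rw [hfilter]
      exact ih fun a ha b hb =>
        hcong a (Multiset.mem_of_mem_erase ha) b (Multiset.mem_of_mem_filter hb)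

theorem rel_congr_iff {T U : Multiset α}
    (hcong : ∀ a ∈ T, ∀ b ∈ U, (r a b ↔ r' a b) ∧ (r b a ↔ r' b a)) :
    MulGE r T U ↔ MulGE r' T U :=
  ⟨rel_congr hcong, rel_congr fun a ha b hb => ⟨(hcong a ha b hb).1.symm, (hcong a ha b hb).2.symm⟩⟩


theorem exists_split {U₁ U₂ V : Multiset α} (h : MulGE r (U₁ + U₂) V) :
    ∃ V₁ V₂, V = V₁ + V₂ ∧ MulGE r U₁ V₁ ∧ MulGE r U₂ V₂ := by
  generalize hU : U₁ + U₂ = U at h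
  induction h generalizing U₁ U₂ with
  | empty => exact ⟨0, 0, rfl, .empty _, .empty _⟩
  | @cancel U V t u ht hu h1 h2 _ ih =>
      wlog ht₁ : t ∈ U₁ generalizing U₁ U₂
      · obtain ⟨V₂, V₁, hV, hV₂, hV₁⟩ := this (U₁ := U₂) (U₂ := U₁) (by rw [add_comm, hU])
          (by rw [← hU] at ht; simpa [ht₁] using ht)
        exact ⟨V₁, V₂, by rw [hV, add_comm], hV₁, hV₂⟩
      obtain ⟨W₁, W₂, hW, hW₁, hW₂⟩ := ih (U₁ := U₁.erase t) (U₂ := U₂)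
        (by rw [← hU, Multiset.erase_add_left_pos _ ht₁])
      refine ⟨u ::ₘ W₁, W₂, ?_, .cancel t u ht₁ (Multiset.mem_cons_self u W₁) h1 h2 ?_, hW₂⟩
      · rw [Multiset.cons_add, ← hW, Multiset.cons_erase hu]
      · rwa [Multiset.erase_cons_head]
  | @dominate U V t ht _ ih =>
      wlog ht₁ : t ∈ U₁ generalizing U₁ U₂
      · obtain ⟨V₂, V₁, hV, hV₂, hV₁⟩ := this (U₁ := U₂) (U₂ := U₁) (by rw [add_comm, hU])
          (by rw [← hU] at ht; simpa [ht₁] using ht)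
        exact ⟨V₁, V₂, by rw [hV, add_comm], hV₁, hV₂⟩
      obtain ⟨W₁, W₂, hW, hW₁, hW₂⟩ := ih (U₁ := U₁.erase t) (U₂ := U₂)
        (by rw [← hU, Multiset.erase_add_left_pos _ ht₁])
      have hW₂le : W₂ ≤ V.filter (fun u => ¬ (r t u ∧ ¬ r u t)) :=
        hW ▸ Multiset.le_add_left W₂ W₁
      refine ⟨V - W₂, W₂, (tsub_add_cancel_of_le (hW₂le.trans (Multiset.filter_le _ _))).symm,
        .dominate t ht₁ ?_, hW₂⟩
      have hfilter : (V - W₂).filter (fun u => ¬ (r t u ∧ ¬ r u t)) = W₁ := by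
        rw [Multiset.filter_sub, hW, Multiset.filter_eq_self.mpr
          fun a ha => Multiset.of_mem_filter (Multiset.mem_of_le hW₂le ha), add_tsub_cancel_right]
      rwa [hfilter]

theorem singleton_left_cases {u : α} {V : Multiset α} (h : MulGE r {u} V) :
    V = 0 ∨ (∃ v, V = {v} ∧ r u v ∧ r v u) ∨ ∀ v ∈ V, r u v ∧ ¬ r v u := by
  cases h with
  | empty => exact Or.inl rfl
  | cancel t v ht hv h1 h2 h =>
      obtain rfl := Multiset.mem_singleton.mp ht
      rw [Multiset.erase_singleton] at h
      refine Or.inr (Or.inl ⟨v, ?_, h1, h2⟩)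
      rw [← Multiset.cons_erase hv, h.eq_zero_of_zero_left, Multiset.cons_zero]
  | dominate t ht h =>
      obtain rfl := Multiset.mem_singleton.mp ht
      rw [Multiset.erase_singleton] at h
      exact Or.inr (Or.inr fun v hv =>
        not_not.mp (Multiset.filter_eq_nil.mp h.eq_zero_of_zero_left v hv))

/-- Transitivity of the multiset extension only needs transitivity of `r` on triples drawn one
from each multiset; these are captured by a bound `k` on a rank `μ`, the form in which they
arise in an induction on term size. -/
theorem trans_of_rank (μ : α → ℕ) (k : ℕ)
    (htrans : ∀ a b c, μ a + μ b + μ c < k → r a b → r b c → r a c)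
    {T U V : Multiset α} (hk : ∀ a ∈ T, ∀ b ∈ U, ∀ c ∈ V, μ a + μ b + μ c < k)
    (hTU : MulGE r T U) (hUV : MulGE r U V) : MulGE r T V := by
  induction hTU generalizing V with
  | empty => rw [hUV.eq_zero_of_zero_left]; exact .empty _
  | @cancel T U t u ht hu htu hut _ ih =>
      obtain ⟨V₁, V₂, rfl, hV₁, hV₂⟩ := exists_split (U₁ := {u}) (U₂ := U.erase u)
        (by rwa [Multiset.singleton_add, Multiset.cons_erase hu])
      have hk' : ∀ c ∈ V₁, μ t + μ u + μ c < k := fun c hc =>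
        hk t ht u hu c (Multiset.mem_add.mpr (Or.inl hc))
      have hTV₂ : MulGE r (T.erase t) V₂ := ih (fun a ha b hb c hc => hk a
        (Multiset.mem_of_mem_erase ha) b (Multiset.mem_of_mem_erase hb) c
        (Multiset.mem_add.mpr (Or.inr hc))) hV₂
      rcases singleton_left_cases hV₁ with rfl | ⟨v, rfl, huv, hvu⟩ | hlt
      · rw [zero_add]; exact mono_left (Multiset.erase_le t T) hTV₂
      · have := hk' v (Multiset.mem_singleton_self v)
        refine .cancel t v ht (by simp) (htrans t u v (by omega) htu huv)
          (htrans v u t (by omega) hvu hut) ?_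
        rwa [Multiset.singleton_add, Multiset.erase_cons_head]
      · rw [add_comm]
        refine add_of_forall_gt ht hTV₂ fun v hv => ?_
        have := hk' v hv
        exact ⟨htrans t u v (by omega) htu (hlt v hv).1,
          fun hvt => (hlt v hv).2 (htrans v t u (by omega) hvt htu)⟩
  | @dominate T U t ht _ ih =>
      obtain ⟨V₁, V₂, rfl, hV₁, hV₂⟩ := exists_split
        (U₁ := U.filter (fun u => ¬ (r t u ∧ ¬ r u t)))
        (U₂ := U.filter (fun u => ¬ ¬ (r t u ∧ ¬ r u t))) (by rwa [Multiset.filter_add_not])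
      have hTV₁ : MulGE r (T.erase t) V₁ := ih (fun a ha b hb c hc => hk a
        (Multiset.mem_of_mem_erase ha) b (Multiset.mem_of_mem_filter hb) c
        (Multiset.mem_add.mpr (Or.inl hc))) hV₁
      refine add_of_forall_gt ht hTV₁ fun v hv => ?_
      obtain ⟨u, hu, huv⟩ := hV₂.exists_ge hv
      obtain ⟨htu, hut⟩ : r t u ∧ ¬ r u t := not_not.mp (Multiset.mem_filter.mp hu).2
      have := hk t ht u (Multiset.mem_of_mem_filter hu) v (Multiset.mem_add.mpr (Or.inr hv))
      exact ⟨htrans t u v (by omega) htu huv, fun hvt => hut (htrans u v t (by omega) huv hvt)⟩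

theorem of_sublistForall₂ {l₁ l₂ : List α} (h : List.SublistForall₂ (fun a c => r c a) l₁ l₂) :
    MulGE r l₂ l₁ := by
  induction h with
  | nil => exact .empty _
  | @cons a₁ a₂ t₁ t₂ hr _ ih =>
      rw [← Multiset.cons_coe, ← Multiset.cons_coe]
      by_cases hba : r a₁ a₂
      · refine .cancel a₂ a₁ (Multiset.mem_cons_self _ _) (Multiset.mem_cons_self _ _) hr hba ?_
        rwa [Multiset.erase_cons_head, Multiset.erase_cons_head]
      · refine .dominate a₂ (Multiset.mem_cons_self _ _) ?_
        rw [Multiset.erase_cons_head, Multiset.filter_cons_of_neg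
          (p := fun u => ¬ (r a₂ u ∧ ¬ r u a₂)) _ (not_not.mpr ⟨hr, hba⟩)]
        exact mono_right (Multiset.filter_le _ _) ih
  | cons_right _ ih =>
      rw [← Multiset.cons_coe]
      exact mono_left (Multiset.le_cons_self _ _) ih

end MulGE

theorem MulGT.singleton_left_iff {α : Type} {r : α → α → Prop} {t : α} {U : Multiset α} :
    MulGT r {t} U ↔ ∀ u ∈ U, r t u ∧ ¬ r u t := by
  refine ⟨fun ⟨hge, hngt⟩ u hu => ⟨?_, fun hut => hngt ?_⟩, fun h => ⟨?_, fun hle => ?_⟩⟩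
  · obtain ⟨t', ht', htu⟩ := hge.exists_ge hu
    exact Multiset.mem_singleton.mp ht' ▸ htu
  · exact MulGE.singleton_right_iff.mpr ⟨u, hu, hut⟩
  · exact MulGE.of_forall_gt (Multiset.mem_singleton_self t) h
  · obtain ⟨u, hu, hut⟩ := MulGE.singleton_right_iff.mp hle
    exact (h u hu).2 hut

namespace GTerm

variable {F : Type} {ar : F → ℕ}

def head : GTerm F ar → F
  | .mk f _ => f

def argList : GTerm F ar → List (GTerm F ar)
  | .mk _ ts => List.ofFn ts

theorem tsize_pos (t : GTerm F ar) : 0 < tsize t := by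
  cases t
  rw [tsize]
  omega

theorem tsize_lt_of_mem_argsM {f : F} {ts : Fin (ar f) → GTerm F ar} {x : GTerm F ar}
    (hx : x ∈ argsM ts) : tsize x < tsize (mk f ts) := by
  obtain ⟨i, rfl⟩ := List.mem_ofFn.mp (Multiset.mem_coe.mp hx)
  have := Finset.single_le_sum (fun j _ => Nat.zero_le (tsize (ts j))) (Finset.mem_univ i)
  rw [tsize]
  omega

end GTerm

open GTerm

section Unfolding

variable {F : Type} {ar : F → ℕ} (ge : F → F → Prop)

def rpqoStep (R : GTerm F ar → GTerm F ar → Prop) : GTerm F ar → GTerm F ar → Prop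
  | .mk f ts, .mk g us =>
      (strictF ge f g ∧ MulGT R {GTerm.mk f ts} (argsM us)) ∨
      (strictF ge g f ∧ MulGE R (argsM ts) {GTerm.mk g us}) ∨
      (equivF ge f g ∧ MulGE R (argsM ts) (argsM us))

theorem RPQOf_succ (n : ℕ) (t u : GTerm F ar) :
    RPQOf ge (n + 1) t u = rpqoStep ge (RPQOf ge n) t u := by
  cases t; cases u; rfl

theorem rpqoStep_congr {R R' : GTerm F ar → GTerm F ar → Prop} {t u : GTerm F ar}
    (h : ∀ a b, tsize a + tsize b < tsize t + tsize u → (R a b ↔ R' a b)) :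
    rpqoStep ge R t u ↔ rpqoStep ge R' t u := by
  obtain ⟨f, ts⟩ := t
  obtain ⟨g, us⟩ := u
  have hcong : ∀ {T U : Multiset (GTerm F ar)},
      (∀ a ∈ T, ∀ b ∈ U, tsize a + tsize b < tsize (mk f ts) + tsize (mk g us)) →
      (MulGE R T U ↔ MulGE R' T U) := fun hT =>
    MulGE.rel_congr_iff fun a ha b hb =>
      ⟨h a b (hT a ha b hb), h b a (by have := hT a ha b hb; omega)⟩
  have hts := fun a (ha : a ∈ argsM ts) => tsize_lt_of_mem_argsM ha
  have hus := fun b (hb : b ∈ argsM us) => tsize_lt_of_mem_argsM hb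
  simp only [rpqoStep, MulGT]
  rw [hcong, hcong, hcong, hcong]
  · intro a ha b hb; have := hts a ha; have := hus b hb; omega
  · intro a ha b hb; obtain rfl := Multiset.mem_singleton.mp hb; have := hts a ha; omega
  · intro a ha b hb; obtain rfl := Multiset.mem_singleton.mp hb; have := hus a ha; omega
  · intro a ha b hb; obtain rfl := Multiset.mem_singleton.mp ha; have := hus b hb; omega

theorem RPQOf_iff_RPQO {n : ℕ} {t u : GTerm F ar} (h : tsize t + tsize u ≤ n) :
    RPQOf ge n t u ↔ RPQO ge t u := by
  have := t.tsize_pos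
  obtain ⟨m, rfl⟩ : ∃ m, n = m + 1 := ⟨n - 1, by omega⟩
  obtain ⟨N, hN⟩ : ∃ N, tsize t + tsize u = N + 1 := ⟨tsize t + tsize u - 1, by omega⟩
  rw [RPQO, hN, RPQOf_succ, RPQOf_succ]
  exact rpqoStep_congr ge fun a b hab =>
    (RPQOf_iff_RPQO (by omega)).trans (RPQOf_iff_RPQO (by omega)).symm
termination_by tsize t + tsize u

theorem RPQO_iff_rpqoStep {t u : GTerm F ar} : RPQO ge t u ↔ rpqoStep ge (RPQO ge) t u := by
  have := t.tsize_pos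
  obtain ⟨N, hN⟩ : ∃ N, tsize t + tsize u = N + 1 := ⟨tsize t + tsize u - 1, by omega⟩
  rw [RPQO, hN, RPQOf_succ]
  exact rpqoStep_congr ge fun a b hab => RPQOf_iff_RPQO ge (by omega)

theorem RPQO_mk_iff {f g : F} {ts : Fin (ar f) → GTerm F ar} {us : Fin (ar g) → GTerm F ar} :
    RPQO ge (mk f ts) (mk g us) ↔
      (strictF ge f g ∧ MulGT (RPQO ge) {mk f ts} (argsM us)) ∨
      (strictF ge g f ∧ MulGE (RPQO ge) (argsM ts) {mk g us}) ∨
      (equivF ge f g ∧ MulGE (RPQO ge) (argsM ts) (argsM us)) :=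
  RPQO_iff_rpqoStep ge

end Unfolding

section Properties

variable {F : Type} {ar : F → ℕ} {ge : F → F → Prop}

theorem strictF_of_strictF_of_ge (htrans : ∀ f g h, ge f g → ge g h → ge f h) {f g h : F}
    (hfg : strictF ge f g) (hgh : ge g h) : strictF ge f h :=
  ⟨htrans f g h hfg.1 hgh, fun hhf => hfg.2 (htrans g h f hgh hhf)⟩

theorem strictF_of_ge_of_strictF (htrans : ∀ f g h, ge f g → ge g h → ge f h) {f g h : F}
    (hfg : ge f g) (hgh : strictF ge g h) : strictF ge f h :=
  ⟨htrans f g h hfg hgh.1, fun hhf => hgh.2 (htrans h f g hhf hfg)⟩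

theorem RPQO.mk_of_strictF {f g : F} {ts : Fin (ar f) → GTerm F ar} {us : Fin (ar g) → GTerm F ar}
    (hfg : strictF ge f g) (hgt : ∀ v ∈ argsM us, RPQO ge (mk f ts) v ∧ ¬ RPQO ge v (mk f ts)) :
    RPQO ge (mk f ts) (mk g us) :=
  (RPQO_mk_iff ge).mpr (Or.inl ⟨hfg, MulGT.singleton_left_iff.mpr hgt⟩)

theorem RPQO.refl (hrefl : ∀ f, ge f f) (t : GTerm F ar) : RPQO ge t t := by
  obtain ⟨f, ts⟩ := t
  refine (RPQO_mk_iff ge).mpr (Or.inr (Or.inr ⟨⟨hrefl f, hrefl f⟩, MulGE.refl fun a ha => ?_⟩))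
  have := tsize_lt_of_mem_argsM ha
  exact RPQO.refl hrefl a
termination_by tsize t

/-- The two statements use each other on pairs of smaller total size, so they are proved
together. -/
theorem RPQO.gt_of_mem_argsM_right_and_ge_of_mem_argsM_left (htotal : ∀ f g, ge f g ∨ ge g f)
    {f g : F} {ts : Fin (ar f) → GTerm F ar} {us : Fin (ar g) → GTerm F ar} :
    (RPQO ge (mk f ts) (mk g us) →
      ∀ v ∈ argsM us, RPQO ge (mk f ts) v ∧ ¬ RPQO ge v (mk f ts)) ∧
    (∀ w ∈ argsM ts, RPQO ge w (mk g us) → RPQO ge (mk f ts) (mk g us)) := by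
  have hgt : ∀ v, tsize v < tsize (mk g us) → ∀ w ∈ argsM ts, RPQO ge w v →
      RPQO ge (mk f ts) v ∧ ¬ RPQO ge v (mk f ts) := by
    rintro ⟨g', us'⟩ hv w hw hwv
    exact ⟨(RPQO.gt_of_mem_argsM_right_and_ge_of_mem_argsM_left htotal).2 w hw hwv, fun hvt =>
      ((RPQO.gt_of_mem_argsM_right_and_ge_of_mem_argsM_left htotal).1 hvt w hw).2 hwv⟩
  refine ⟨fun h v hv => ?_, fun w hw hwu => ?_⟩
  · have hvu := tsize_lt_of_mem_argsM hv
    rcases (RPQO_mk_iff ge).mp h with ⟨-, hM⟩ | ⟨-, hM⟩ | ⟨-, hM⟩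
    · exact MulGT.singleton_left_iff.mp hM v hv
    · obtain ⟨w, hw, hwu⟩ := MulGE.singleton_right_iff.mp hM
      have := tsize_lt_of_mem_argsM hw
      obtain ⟨f', ts'⟩ := w
      exact hgt v hvu _ hw
        ((RPQO.gt_of_mem_argsM_right_and_ge_of_mem_argsM_left htotal).1 hwu v hv).1
    · obtain ⟨w, hw, hwv⟩ := hM.exists_ge hv
      exact hgt v hvu w hw hwv
  · have := tsize_lt_of_mem_argsM hw
    obtain ⟨f', ts'⟩ := w
    have hwgt := (RPQO.gt_of_mem_argsM_right_and_ge_of_mem_argsM_left htotal).1 hwu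
    by_cases hfg : ge f g <;> by_cases hgf : ge g f
    · exact (RPQO_mk_iff ge).mpr (Or.inr (Or.inr ⟨⟨hfg, hgf⟩, MulGE.of_forall_gt hw hwgt⟩))
    · exact RPQO.mk_of_strictF ⟨hfg, hgf⟩ fun v hv =>
        hgt v (tsize_lt_of_mem_argsM hv) _ hw (hwgt v hv).1
    · exact (RPQO_mk_iff ge).mpr (Or.inr (Or.inl ⟨⟨hgf, hfg⟩,
        MulGE.singleton_right_iff.mpr ⟨_, hw, hwu⟩⟩))
    · exact ((htotal f g).resolve_left hfg |> hgf).elim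
termination_by tsize (mk f ts) + tsize (mk g us)

theorem RPQO.gt_of_mem_argsM_right (htotal : ∀ f g, ge f g ∨ ge g f) {v : GTerm F ar} {f g : F}
    {ts : Fin (ar f) → GTerm F ar} {us : Fin (ar g) → GTerm F ar}
    (h : RPQO ge (mk f ts) (mk g us)) (hv : v ∈ argsM us) :
    RPQO ge (mk f ts) v ∧ ¬ RPQO ge v (mk f ts) :=
  (RPQO.gt_of_mem_argsM_right_and_ge_of_mem_argsM_left htotal).1 h v hv

theorem RPQO.gt_of_mem_argsM_left (htotal : ∀ f g, ge f g ∨ ge g f) {w : GTerm F ar} {f g : F}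
    {ts : Fin (ar f) → GTerm F ar} {us : Fin (ar g) → GTerm F ar}
    (hw : w ∈ argsM ts) (h : RPQO ge w (mk g us)) :
    RPQO ge (mk f ts) (mk g us) ∧ ¬ RPQO ge (mk g us) (mk f ts) :=
  ⟨(RPQO.gt_of_mem_argsM_right_and_ge_of_mem_argsM_left htotal).2 w hw h,
    fun hut => (RPQO.gt_of_mem_argsM_right htotal hut hw).2 h⟩

theorem RPQO.trans (htrans : ∀ f g h, ge f g → ge g h → ge f h)
    (htotal : ∀ f g, ge f g ∨ ge g f) {s t u : GTerm F ar}
    (hst : RPQO ge s t) (htu : RPQO ge t u) : RPQO ge s u :=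
  match s, t, u, hst, htu with
  | mk f ss, mk g ts, mk h us, hst, htu => by
    have ih : ∀ a b c, tsize a + tsize b + tsize c < tsize (mk f ss) + tsize (mk g ts) +
        tsize (mk h us) → RPQO ge a b → RPQO ge b c → RPQO ge a c :=
      fun _ _ _ _ => RPQO.trans htrans htotal
    have hgt : ∀ v ∈ argsM us, RPQO ge (mk f ss) v ∧ ¬ RPQO ge v (mk f ss) := fun v hv => by
      have := tsize_lt_of_mem_argsM hv
      have ⟨htv, hvt⟩ := RPQO.gt_of_mem_argsM_right htotal htu hv
      exact ⟨ih _ _ _ (by omega) hst htv, fun hvs => hvt (ih _ _ _ (by omega) hvs hst)⟩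
    have hviaArg : MulGE (RPQO ge) (argsM ts) {mk h us} → RPQO ge (mk f ss) (mk h us) := by
      intro hM
      obtain ⟨w, hw, hwu⟩ := MulGE.singleton_right_iff.mp hM
      have := tsize_lt_of_mem_argsM hw
      exact ih _ _ _ (by omega) (RPQO.gt_of_mem_argsM_right htotal hst hw).1 hwu
    rcases (RPQO_mk_iff ge).mp hst with ⟨hfg, -⟩ | ⟨-, hM₁⟩ | ⟨hfg, hM₁⟩
    · rcases (RPQO_mk_iff ge).mp htu with ⟨⟨hgh, -⟩, -⟩ | ⟨-, hM₂⟩ | ⟨⟨hgh, -⟩, -⟩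
      · exact RPQO.mk_of_strictF (strictF_of_strictF_of_ge htrans hfg hgh) hgt
      · exact hviaArg hM₂
      · exact RPQO.mk_of_strictF (strictF_of_strictF_of_ge htrans hfg hgh) hgt
    · obtain ⟨w, hw, hwt⟩ := MulGE.singleton_right_iff.mp hM₁
      have := tsize_lt_of_mem_argsM hw
      exact (RPQO.gt_of_mem_argsM_left htotal hw (ih _ _ _ (by omega) hwt htu)).1
    · rcases (RPQO_mk_iff ge).mp htu with ⟨hgh, -⟩ | ⟨-, hM₂⟩ | ⟨hgh, hM₂⟩
      · exact RPQO.mk_of_strictF (strictF_of_ge_of_strictF htrans hfg.1 hgh) hgt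
      · exact hviaArg hM₂
      · refine (RPQO_mk_iff ge).mpr (Or.inr (Or.inr ⟨⟨htrans f g h hfg.1 hgh.1,
          htrans h g f hgh.2 hfg.2⟩, MulGE.trans_of_rank tsize _ ih ?_ hM₁ hM₂⟩))
        intro a ha b hb c hc
        have := tsize_lt_of_mem_argsM ha
        have := tsize_lt_of_mem_argsM hb
        have := tsize_lt_of_mem_argsM hc
        omega
termination_by tsize s + tsize t + tsize u

theorem RPQO.of_head_of_argList (htotal : ∀ f g, ge f g ∨ ge g f) {t u : GTerm F ar}
    (hhead : ge t.head u.head)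
    (hargs : MulGE (RPQO ge) (t.argList : Multiset (GTerm F ar)) u.argList) : RPQO ge t u := by
  obtain ⟨f, ts⟩ := t
  obtain ⟨g, us⟩ := u
  by_cases hgf : ge g f
  · exact (RPQO_mk_iff ge).mpr (Or.inr (Or.inr ⟨⟨hhead, hgf⟩, hargs⟩))
  · refine RPQO.mk_of_strictF ⟨hhead, hgf⟩ fun v hv => ?_
    obtain ⟨w, hw, hwv⟩ := hargs.exists_ge hv
    obtain ⟨g', us'⟩ := v
    exact RPQO.gt_of_mem_argsM_left htotal hw hwv

end Properties

open Set.PartiallyWellOrderedOn in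
theorem Set.partiallyWellOrderedOn_iUnion_of_isMinBadSeq {α : Type*} {r : α → α → Prop}
    {rk : α → ℕ} {s : Set α} {f : ℕ → α} (sub : α → Set α) (hsub : ∀ a ∈ s, sub a ⊆ s)
    (hrk : ∀ a, ∀ x ∈ sub a, rk x < rk a) (hr : ∀ a, ∀ x ∈ sub a, ∀ y, r y x → r y a)
    (hf : IsBadSeq r s f) (hmin : ∀ n, IsMinBadSeq r rk s n f) :
    (⋃ n, sub (f n)).PartiallyWellOrderedOn r := by
  rw [iff_forall_not_isBadSeq]
  rintro v ⟨hv, hvbad⟩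
  choose n hn using fun l => Set.mem_iUnion.mp (hv l)
  set l₀ := Function.argmin n
  have hn₀ : ∀ l, n l₀ ≤ n l := fun l => Function.argmin_le n l
  refine hmin (n l₀) (fun i => if i < n l₀ then f i else v (l₀ + (i - n l₀)))
    (fun m hm => (if_pos hm).symm) ?_ ⟨fun i => ?_, fun i j hij => ?_⟩
  · simpa using hrk _ _ (hn l₀)
  · dsimp only
    split_ifs
    exacts [hf.1 i, hsub _ (hf.1 _) (hn _)]
  · dsimp only
    split_ifs with hi hj hj
    · exact hf.2 i j hij
    · exact fun hij' => hf.2 i _ (hi.trans_le (hn₀ _)) (hr _ _ (hn _) _ hij')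
    · omega
    · exact hvbad _ _ (by omega)

section WellQuasiOrder

variable {F : Type} {ar : F → ℕ} {ge : F → F → Prop}

theorem wellQuasiOrdered_RPQO (hrefl : ∀ f, ge f f) (htrans : ∀ f g h, ge f g → ge g h → ge f h)
    (htotal : ∀ f g, ge f g ∨ ge g f) (hwqo : WellQuasiOrdered fun f g => ge g f) :
    WellQuasiOrdered fun t u : GTerm F ar => RPQO ge u t := by
  have : IsPreorder F fun f g => ge g f :=
    { refl := hrefl, trans := fun f g h hgf hhg => htrans h g f hhg hgf }
  have : IsPreorder (GTerm F ar) fun t u => RPQO ge u t :=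
    { refl := RPQO.refl hrefl, trans := fun _ _ _ hts hut => RPQO.trans htrans htotal hut hts }
  rw [← Set.partiallyWellOrderedOn_univ_iff,
    Set.PartiallyWellOrderedOn.iff_not_exists_isMinBadSeq tsize]
  rintro ⟨b, hbad, hmin⟩
  have hargs := Set.partiallyWellOrderedOn_iUnion_of_isMinBadSeq (fun t => {x | x ∈ t.argList})
    (fun _ _ => Set.subset_univ _) ?_ ?_ hbad hmin
  · obtain ⟨m, n, hmn, hhead, hlist⟩ :=
      ((Set.partiallyWellOrderedOn_univ_iff.mpr hwqo).prod
        hargs.partiallyWellOrderedOn_sublistForall₂).exists_lt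
        (f := fun k => ((b k).head, (b k).argList))
        fun k => ⟨Set.mem_univ _, fun x hx => Set.mem_iUnion.mpr ⟨k, hx⟩⟩
    exact hbad.2 m n hmn (RPQO.of_head_of_argList htotal hhead (MulGE.of_sublistForall₂ hlist))
  · rintro ⟨f, ts⟩ x hx
    exact tsize_lt_of_mem_argsM (Multiset.mem_coe.mpr hx)
  · rintro ⟨f, ts⟩ x hx ⟨g, us⟩ hxy
    exact (RPQO.gt_of_mem_argsM_left htotal (Multiset.mem_coe.mpr hx) hxy).1

end WellQuasiOrder

theorem stmt_9_general {F : Type} (ar : F → ℕ) (ge : F → F → Prop)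
    (hrefl : ∀ f, ge f f) (htrans : ∀ f g h, ge f g → ge g h → ge f h)
    (htotal : ∀ f g, ge f g ∨ ge g f)
    (hwqo : ∀ s : ℕ → F, ∃ i j : ℕ, i < j ∧ ge (s j) (s i))
    (seq : ℕ → GTerm F ar) :
    ∃ i j : ℕ, i < j ∧ RPQO ge (seq j) (seq i) :=
  wellQuasiOrdered_RPQO hrefl htrans htotal hwqo seq

/-- If the precedence on a finite set of function symbols is a total
well-quasi-ordering, then the derived recursive path quasi-ordering is a
well-quasi-ordering on ground terms. -/
theorem stmt_9 {F : Type} [Fintype F] (ar : F → ℕ) (ge : F → F → Prop)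
    (hrefl : ∀ f, ge f f) (htrans : ∀ f g h, ge f g → ge g h → ge f h)
    (htotal : ∀ f g, ge f g ∨ ge g f)
    (hwqo : ∀ s : ℕ → F, ∃ i j : ℕ, i < j ∧ ge (s j) (s i))
    (seq : ℕ → GTerm F ar) :
    ∃ i j : ℕ, i < j ∧ RPQO ge (seq j) (seq i) :=
  stmt_9_general ar ge hrefl htrans htotal hwqo seq
end
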